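/- Let r be a natural number, let G be a finite simple graph and let v be a vertex of G whose punctured ball (for parameter r) is connected. Then for every nonempty proper subset X of the set of edges of G incident with v, there is a cycle of G containing the vertex v, all of whose vertices other than v lie in the punctured ball at v, and whose edge set contains exactly one edge of X. -/

import Mathlib

open SimpleGraph

/-- The ball of radius `r/2` around `v`: vertices at distance at most `⌊r/2⌋` from `v`,
with all edges of `G` between such vertices except, when `r` is even, edges joining two
vertices both at distance exactly `r/2` from `v`. -/
def ballSubgraph {V : Type*} (G : SimpleGraph V) (r : ℕ) (v : V) : G.Subgraph where
  verts := {w | G.Reachable v w ∧ G.dist v w ≤ r / 2}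
  Adj x y := G.Adj x y ∧ (G.Reachable v x ∧ G.dist v x ≤ r / 2) ∧
      (G.Reachable v y ∧ G.dist v y ≤ r / 2) ∧
      ¬(Even r ∧ 2 * G.dist v x = r ∧ 2 * G.dist v y = r)
  adj_sub h := h.1
  edge_vert h := h.2.1
  symm := by
    constructor
    intro x y h
    exact ⟨h.1.symm, h.2.2.1, h.2.1, by tauto⟩

/-- The punctured ball at `v` for parameter `r`: the ball `B_{r/2}(v)` with `v` deleted. -/
def puncturedBall {V : Type*} (G : SimpleGraph V) (r : ℕ) (v : V) : G.Subgraph :=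
  (ballSubgraph G r v).deleteVerts {v}

/-!
Pick `vx ∈ X` and `vy ∉ X`. A nonempty punctured ball forces `⌊r/2⌋ ≥ 1`, so it contains all
neighbours of `v`; joining `x` to `y` by a path inside it and closing up through `v` gives a
cycle whose only edges at `v` are `vx` and `vy`, hence it meets `X` exactly in `vx`.
-/

namespace SimpleGraph

variable {V : Type*} {G : SimpleGraph V}

lemma exists_adj_eq_of_mem_incidenceSet {v : V} {e : Sym2 V} (he : e ∈ G.incidenceSet v) :
    ∃ w, G.Adj v w ∧ e = s(v, w) := by
  obtain ⟨a, b⟩ := e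
  obtain ⟨hab, rfl | rfl⟩ := G.mk'_mem_incidenceSet_iff.1 he
  · exact ⟨b, hab, rfl⟩
  · exact ⟨a, hab.symm, Sym2.eq_swap⟩

lemma Subgraph.Connected.exists_isPath_support_subset {H : G.Subgraph} (hH : H.Connected)
    {u w : V} (hu : u ∈ H.verts) (hw : w ∈ H.verts) :
    ∃ p : G.Walk u w, p.IsPath ∧ ∀ z ∈ p.support, z ∈ H.verts := by
  classical
  obtain ⟨p, hpH⟩ := ((Subgraph.connected_iff_forall_exists_walk_subgraph H).1 hH).2 hu hw
  refine ⟨p.bypass, p.bypass_isPath, fun z hz => ?_⟩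
  exact Subgraph.verts_mono hpH <| (Walk.verts_toSubgraph p).symm ▸
    p.support_bypass_subset_support hz

namespace Walk

variable {v x y : V}

lemma IsPath.isCycle_cons_concat {q : G.Walk x y} (hq : q.IsPath) (hvx : G.Adj v x)
    (hvy : G.Adj v y) (hxy : x ≠ y) (hvq : v ∉ q.support) :
    (cons hvx (q.concat hvy.symm)).IsCycle := by
  refine (cons_isCycle_iff _ hvx).2 ⟨hq.concat hvq hvy.symm, ?_⟩
  rw [edges_concat, List.concat_eq_append, List.mem_append, List.mem_singleton, not_or]
  refine ⟨fun h => hvq (q.fst_mem_support_of_mem_edges h), fun h => ?_⟩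
  rcases Sym2.eq_iff.1 h with ⟨rfl, -⟩ | ⟨-, rfl⟩
  exacts [hvy.ne rfl, hxy rfl]

lemma eq_or_eq_of_mem_edges_cons_concat {q : G.Walk x y} (hvx : G.Adj v x) (hvy : G.Adj v y)
    (hvq : v ∉ q.support) {e : Sym2 V} (he : e ∈ (cons hvx (q.concat hvy.symm)).edges)
    (hve : v ∈ e) : e = s(v, x) ∨ e = s(v, y) := by
  rw [edges_cons, edges_concat, List.concat_eq_append, List.mem_cons, List.mem_append,
    List.mem_singleton] at he
  rcases he with rfl | he | rfl
  · exact .inl rfl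
  · exact absurd (mem_support_of_mem_edges he hve) hvq
  · exact .inr Sym2.eq_swap

end Walk

end SimpleGraph

lemma mem_puncturedBall_verts_of_adj {V : Type*} {G : SimpleGraph V} {r : ℕ} {v x : V}
    (hne : (puncturedBall G r v).verts.Nonempty) (hvx : G.Adj v x) :
    x ∈ (puncturedBall G r v).verts := by
  obtain ⟨w, ⟨hvw, hdist⟩, hwv⟩ := hne
  have hw : G.dist v w ≠ 0 := fun h => hwv (hvw.dist_eq_zero_iff.1 h).symm
  exact ⟨⟨hvx.reachable, (dist_eq_one_iff_adj.2 hvx).trans_le (by omega)⟩,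
    fun h => hvx.ne (Set.mem_singleton_iff.1 h).symm⟩

theorem exists_cycle_through_punctured_ball_general
    {V : Type*} [DecidableEq V] (r : ℕ) (G : SimpleGraph V) (v : V)
    (hconn : (puncturedBall G r v).Connected) :
    ∀ X : Finset (Sym2 V), ↑X ⊆ G.incidenceSet v → X.Nonempty →
      ↑X ≠ G.incidenceSet v →
      ∃ c : G.Walk v v, c.IsCycle ∧
        (∀ w ∈ c.support, w ≠ v → w ∈ (puncturedBall G r v).verts) ∧
        (X ∩ c.edges.toFinset).card = 1 := by
  intro X hXv ⟨e, heX⟩ hXne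
  obtain ⟨x, hvx, rfl⟩ := exists_adj_eq_of_mem_incidenceSet (hXv heX)
  obtain ⟨f, hfv, hfX⟩ := Set.exists_of_ssubset (hXv.ssubset_of_ne hXne)
  obtain ⟨y, hvy, rfl⟩ := exists_adj_eq_of_mem_incidenceSet hfv
  have hxy : x ≠ y := by rintro rfl; exact hfX heX
  obtain ⟨q, hq, hqH⟩ := hconn.exists_isPath_support_subset
    (mem_puncturedBall_verts_of_adj hconn.nonempty hvx)
    (mem_puncturedBall_verts_of_adj hconn.nonempty hvy)
  have hvq : v ∉ q.support := fun h => (hqH v h).2 rfl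
  refine ⟨.cons hvx (q.concat hvy.symm), hq.isCycle_cons_concat hvx hvy hxy hvq, ?_, ?_⟩
  · intro w hw hwv
    rw [Walk.support_cons, Walk.support_concat, List.mem_cons, List.mem_append,
      List.mem_singleton] at hw
    rcases hw with rfl | hw | rfl
    exacts [absurd rfl hwv, hqH w hw, absurd rfl hwv]
  · refine Finset.card_eq_one.2 ⟨s(v, x), Finset.eq_singleton_iff_unique_mem.2 ⟨?_, ?_⟩⟩
    · exact Finset.mem_inter.2 ⟨heX, List.mem_toFinset.2 (List.mem_cons_self ..)⟩
    · intro g hg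
      obtain ⟨hgX, hgc⟩ := Finset.mem_inter.1 hg
      refine (Walk.eq_or_eq_of_mem_edges_cons_concat hvx hvy hvq (List.mem_toFinset.1 hgc)
        (hXv hgX).2).resolve_right ?_
      rintro rfl
      exact hfX hgX

theorem exists_cycle_through_punctured_ball
    {V : Type*} [Fintype V] [DecidableEq V] (r : ℕ) (G : SimpleGraph V) (v : V)
    (hconn : (puncturedBall G r v).Connected) :
    ∀ X : Finset (Sym2 V), ↑X ⊆ G.incidenceSet v → X.Nonempty →
      ↑X ≠ G.incidenceSet v →
      ∃ c : G.Walk v v, c.IsCycle ∧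
        (∀ w ∈ c.support, w ≠ v → w ∈ (puncturedBall G r v).verts) ∧
        (X ∩ c.edges.toFinset).card = 1 :=
  exists_cycle_through_punctured_ball_general r G v hconn
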